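/- Let λ > 0 and let h₊(t) = 2cos(2πλt) − 1_{(−λ,λ)}(t) g₊(t) − 2∫₀^λ cos(2πts) g₊(s) ds, where g₊ = g_{+1}. Define the tempered distribution A_λ by ⟨A_λ, χ⟩ = χ(λ) + χ(−λ) + ∫_ℝ h₊(t) χ(t) dt for Schwartz functions χ (the integral converges absolutely). Then: (i) ⟨A_λ, ℱχ⟩ = ⟨A_λ, χ⟩ for every Schwartz function χ (A_λ is invariant under the Fourier transform); (ii) ⟨A_λ, χ⟩ = 0 for every Schwartz function χ with support contained in (−λ,λ); consequently also ⟨A_λ, ℱχ⟩ = 0 for every such χ, i.e. A_λ has the Sonine property. -/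

import Mathlib

open MeasureTheory Complex Set FourierTransform

noncomputable section

/-- `F` is the Fourier–Plancherel transform on `L²(ℝ)`: the unitary operator agreeing with
the Fourier integral `x ↦ ∫ y, exp(2πixy) f y` on integrable square-integrable functions. -/
def IsFourierPlancherel
    (F : Lp ℂ 2 (volume : Measure ℝ) ≃ₗᵢ[ℂ] Lp ℂ 2 (volume : Measure ℝ)) : Prop :=
  ∀ (f : ℝ → ℂ) (_ : Integrable f volume) (hf : MemLp f 2 volume),
    (F (hf.toLp f) : ℝ → ℂ) =ᵐ[volume] 𝓕⁻ f

/-- `P_λ` : multiplication by the indicator function of `(-λ, λ)` on `L²(ℝ)`. -/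
def Pproj (lam : ℝ) (f : Lp ℂ 2 (volume : Measure ℝ)) : Lp ℂ 2 (volume : Measure ℝ) :=
  ((Lp.memLp f).indicator (measurableSet_Ioo : MeasurableSet (Ioo (-lam) lam))).toLp _


/-- The operator `F_λ = P_λ ℱ P_λ`. -/
def Fop (lam : ℝ)
    (F : Lp ℂ 2 (volume : Measure ℝ) ≃ₗᵢ[ℂ] Lp ℂ 2 (volume : Measure ℝ))
    (f : Lp ℂ 2 (volume : Measure ℝ)) : Lp ℂ 2 (volume : Measure ℝ) :=
  Pproj lam (F (Pproj lam f))

/-- `h₊(t) = 2cos(2πλt) − 1_{(−λ,λ)}(t)g₊(t) − 2∫₀^λ cos(2πts) g₊(s) ds`. -/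
def hplus (lam : ℝ) (g : Lp ℂ 2 (volume : Measure ℝ)) : ℝ → ℂ := fun t =>
  2 * Real.cos (2 * Real.pi * lam * t) - Set.indicator (Ioo (-lam) lam) (⇑g) t -
    2 * ∫ s in (0:ℝ)..lam, (Real.cos (2 * Real.pi * t * s) : ℂ) * g s

/-- The pairing `⟨A_λ, χ⟩ = χ(λ) + χ(−λ) + ∫_ℝ h(t) χ(t) dt`. -/
def pairingA (lam : ℝ) (h : ℝ → ℂ) (χ : ℝ → ℂ) : ℂ :=
  χ lam + χ (-lam) + ∫ t : ℝ, h t * χ t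

/-!
Write `G = 1_{(−λ,λ)} g₊`. Since `g₊` is even, `2∫₀^λ cos(2πts) g₊(s) ds = 𝓕⁻G(t)`, so
`h₊ = 2cos(2πλ·) − G − 𝓕⁻G`, and pairing `2cos(2πλ·)` with `χ` gives `𝓕⁻χ(λ) + 𝓕⁻χ(−λ)`.
Replacing `χ` by `𝓕⁻χ`, for which `𝓕⁻𝓕⁻χ = χ(−·)`, therefore swaps the point masses at `±λ`
with the cosine term and (by the multiplication formula and evenness of `G`) the term `G` with
`𝓕⁻G`: this is the Fourier invariance. On `(−λ,λ)` the defining equation of `g₊` reads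
`g₊ + 𝓕⁻G = 2cos(2πλ·)`, i.e. `h₊ = 0` there, which gives the Sonine property.
-/

open scoped Real SchwartzMap

section FourierInv

variable {V E : Type*} [NormedAddCommGroup V] [InnerProductSpace ℝ V] [FiniteDimensional ℝ V]
  [MeasurableSpace V] [BorelSpace V] [NormedAddCommGroup E] [NormedSpace ℂ E]

theorem MeasureTheory.Integrable.continuous_fourierInv {f : V → E} (hf : Integrable f) :
    Continuous (𝓕⁻ f) :=
  VectorFourier.fourierIntegral_continuous Real.continuous_fourierChar
    (-innerSL ℝ : V →L[ℝ] V →L[ℝ] ℝ).continuous₂ hf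

theorem Real.norm_fourierInv_le_integral_norm (f : V → E) (w : V) :
    ‖𝓕⁻ f w‖ ≤ ∫ v, ‖f v‖ :=
  VectorFourier.norm_fourierIntegral_le_integral_norm _ _ _ _ _

theorem Real.integral_fourierInv_mul_eq {f u : V → ℂ} (hf : Integrable f) (hu : Integrable u) :
    ∫ v, 𝓕⁻ f v * u v = ∫ v, f v * 𝓕⁻ u v := by
  have hflip : (-innerₗ V).flip = -innerₗ V := by
    ext x y; simp [real_inner_comm]
  have := VectorFourier.integral_fourierIntegral_smul_eq_flip (L := -innerₗ V)
    Real.continuous_fourierChar (-innerSL ℝ : V →L[ℝ] V →L[ℝ] ℝ).continuous₂ hf hu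
  rw [hflip] at this
  simp only [smul_eq_mul] at this
  exact this

theorem Real.fourierInv_eq_fourier_of_even {f : V → E} (hf : ∀ᵐ v, f (-v) = f v) :
    𝓕⁻ f = 𝓕 f := by
  ext w
  rw [fourierInv_eq_fourier_comp_neg]
  exact fourier_congr_ae hf w

theorem SchwartzMap.fourierInv_fourierInv_apply [CompleteSpace E] (χ : 𝓢(V, E)) (w : V) :
    𝓕⁻ (𝓕⁻ (χ : V → E)) w = χ (-w) := by
  rw [Real.fourierInv_eq_fourier_neg, ← fourierInv_coe, ← fourier_coe, fourier_fourierInv_eq]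

end FourierInv

theorem Real.fourierInv_real_eq_integral_exp_mul (u : ℝ → ℂ) (w : ℝ) :
    𝓕⁻ u w = ∫ v : ℝ, Complex.exp (↑(2 * π * v * w) * Complex.I) * u v := by
  rw [Real.fourierInv_eq']
  congr 1 with v
  simp only [RCLike.inner_apply, conj_trivial, smul_eq_mul]
  push_cast
  ring_nf

theorem Real.integral_two_cos_mul {u : ℝ → ℂ} (hu : Integrable u) (a : ℝ) :
    ∫ t, 2 * Real.cos (2 * π * a * t) * u t = 𝓕⁻ u a + 𝓕⁻ u (-a) := by
  simp only [Real.fourierInv_real_eq_integral_exp_mul]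
  rw [← integral_add]
  · congr 1 with t
    rw [Complex.ofReal_cos, Complex.cos]
    push_cast
    ring_nf
  all_goals
    refine hu.bdd_mul (c := 1) (by fun_prop) (.of_forall fun t => ?_)
    rw [Complex.norm_exp_ofReal_mul_I]

theorem intervalIntegral.integral_neg_self_eq_two_smul_of_even {E : Type*}
    [NormedAddCommGroup E] [NormedSpace ℝ E] {f : ℝ → E} (heven : ∀ᵐ x, f (-x) = f x)
    {a : ℝ} (hf : IntervalIntegrable f volume (-a) a) :
    ∫ x in -a..a, f x = (2 : ℝ) • ∫ x in 0..a, f x := by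
  have hleft : ∫ x in -a..0, f x = ∫ x in 0..a, f x := by
    rw [← neg_zero, ← intervalIntegral.integral_comp_neg, neg_zero]
    refine intervalIntegral.integral_congr_ae (heven.mono fun x hx _ => hx)
  rw [← intervalIntegral.integral_add_adjacent_intervals (b := 0), hleft, two_smul]
  · exact hf.mono_set (uIcc_subset_uIcc_left (by simp [uIcc, le_total]))
  · exact hf.mono_set (uIcc_subset_uIcc_right (by simp [uIcc, le_total]))

theorem Real.fourierInv_eq_integral_cos_mul_of_even {f : ℝ → ℂ} (hf : Integrable f)
    (heven : ∀ᵐ v, f (-v) = f v) (w : ℝ) :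
    𝓕⁻ f w = ∫ v, Real.cos (2 * π * w * v) * f v := by
  have h := Real.integral_two_cos_mul hf w
  rw [Real.fourierInv_eq_fourier_neg f (-w), neg_neg,
    ← Real.fourierInv_eq_fourier_of_even heven] at h
  simp only [mul_assoc (2 : ℂ), integral_const_mul] at h
  linear_combination -h / 2

theorem SchwartzMap.integral_fourierInv_mul_fourierInv_of_even {f : ℝ → ℂ} (hf : Integrable f)
    (heven : ∀ᵐ v, f (-v) = f v) (χ : 𝓢(ℝ, ℂ)) :
    ∫ v, 𝓕⁻ f v * 𝓕⁻ (χ : ℝ → ℂ) v = ∫ v, f v * χ v := by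
  have hχ : Integrable (𝓕⁻ (χ : ℝ → ℂ)) := by
    rw [← fourierInv_coe]; exact (𝓕⁻ χ).integrable
  calc ∫ v, 𝓕⁻ f v * 𝓕⁻ (χ : ℝ → ℂ) v
      = ∫ v, f v * χ (-v) := by
        simp only [Real.integral_fourierInv_mul_eq hf hχ, fourierInv_fourierInv_apply]
    _ = ∫ v, f (-v) * χ v := by
        rw [← integral_neg_eq_self]; simp only [neg_neg]
    _ = ∫ v, f v * χ v := integral_congr_ae (heven.mono fun v hv => by simp only [hv])

theorem integrable_two_cos_mul (lam : ℝ) (χ : 𝓢(ℝ, ℂ)) :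
    Integrable (fun t => 2 * Real.cos (2 * π * lam * t) * χ t) :=
  χ.integrable.bdd_mul (c := 2) (by fun_prop) (.of_forall fun t => by
    simp only [norm_mul, Complex.norm_ofNat, Complex.norm_real, Real.norm_eq_abs]
    linarith [Real.abs_cos_le_one (2 * π * lam * t)])

theorem MeasureTheory.Integrable.mul_schwartz {G : ℝ → ℂ} (hG : Integrable G) (χ : 𝓢(ℝ, ℂ)) :
    Integrable (fun t => G t * χ t) :=
  hG.mul_bdd χ.continuous.aestronglyMeasurable
    (.of_forall (χ.toBoundedContinuousFunction).norm_coe_le_norm)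

theorem MeasureTheory.Integrable.fourierInv_mul_schwartz {G : ℝ → ℂ} (hG : Integrable G)
    (χ : 𝓢(ℝ, ℂ)) :
    Integrable (fun t => 𝓕⁻ G t * χ t) :=
  χ.integrable.bdd_mul hG.continuous_fourierInv.aestronglyMeasurable
    (.of_forall (Real.norm_fourierInv_le_integral_norm G))

theorem MeasureTheory.LocallyIntegrable.integrable_indicator_Ioo {E : Type*}
    [NormedAddCommGroup E] {f : ℝ → E} (hf : LocallyIntegrable f) (a b : ℝ) :
    Integrable ((Ioo a b).indicator f) :=
  ((hf.integrableOn_isCompact isCompact_Icc).mono_set Ioo_subset_Icc_self).integrable_indicator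
    measurableSet_Ioo

theorem ae_indicator_Ioo_neg_eq_of_even {E : Type*} [Zero E] {f : ℝ → E}
    (hf : ∀ᵐ x, f (-x) = f x) (a : ℝ) :
    ∀ᵐ x, (Ioo (-a) a).indicator f (-x) = (Ioo (-a) a).indicator f x :=
  hf.mono fun x hx => by simp [indicator_apply, hx, neg_lt, and_comm]

def hplusOf (lam : ℝ) (G : ℝ → ℂ) : ℝ → ℂ := fun t =>
  2 * Real.cos (2 * π * lam * t) - G t - 𝓕⁻ G t

theorem hplus_eq_hplusOf {lam : ℝ} (hlam : 0 ≤ lam) {g : Lp ℂ 2 (volume : Measure ℝ)}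
    (hge : ∀ᵐ x : ℝ, g (-x) = g x) :
    hplus lam g = hplusOf lam ((Ioo (-lam) lam).indicator g) := by
  have hloc : LocallyIntegrable g := (Lp.memLp g).locallyIntegrable one_le_two
  funext t
  simp only [hplus, hplusOf, sub_right_inj]
  have hcos_g : IntervalIntegrable (fun s => (Real.cos (2 * π * t * s) : ℂ) * g s) volume
      (-lam) lam :=
    (hloc.integrableOn_isCompact isCompact_uIcc).intervalIntegrable.continuousOn_mul
      (by fun_prop)
  have hcos_g_even : ∀ᵐ s : ℝ, (Real.cos (2 * π * t * -s) : ℂ) * g (-s)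
      = Real.cos (2 * π * t * s) * g s :=
    hge.mono fun s hs => by rw [hs, mul_neg, Real.cos_neg]
  calc 2 * ∫ s in (0 : ℝ)..lam, (Real.cos (2 * π * t * s) : ℂ) * g s
      = ∫ s in -lam..lam, (Real.cos (2 * π * t * s) : ℂ) * g s := by
        rw [intervalIntegral.integral_neg_self_eq_two_smul_of_even hcos_g_even hcos_g,
          two_smul, two_mul]
    _ = ∫ s, Real.cos (2 * π * t * s) * (Ioo (-lam) lam).indicator g s := by
        rw [intervalIntegral.integral_of_le (neg_le_self hlam), integral_Ioc_eq_integral_Ioo,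
          ← integral_indicator measurableSet_Ioo]
        simp only [indicator_mul_right]
    _ = 𝓕⁻ ((Ioo (-lam) lam).indicator g) t :=
        (Real.fourierInv_eq_integral_cos_mul_of_even (hloc.integrable_indicator_Ioo (-lam) lam)
          (ae_indicator_Ioo_neg_eq_of_even hge lam) t).symm

section hplusOf

variable {lam : ℝ} {G : ℝ → ℂ}

theorem integrable_hplusOf_mul (hG : Integrable G) (χ : 𝓢(ℝ, ℂ)) :
    Integrable (fun t => hplusOf lam G t * χ t) := by
  refine (((integrable_two_cos_mul lam χ).sub (hG.mul_schwartz χ)).sub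
    (hG.fourierInv_mul_schwartz χ)).congr (.of_forall fun t => ?_)
  simp only [hplusOf, Pi.sub_apply, sub_mul]

theorem integral_hplusOf_mul (hG : Integrable G) (χ : 𝓢(ℝ, ℂ)) :
    ∫ t, hplusOf lam G t * χ t = 𝓕⁻ (χ : ℝ → ℂ) lam + 𝓕⁻ (χ : ℝ → ℂ) (-lam)
      - (∫ t, G t * χ t) - ∫ t, 𝓕⁻ G t * χ t := by
  simp only [hplusOf, sub_mul]
  rw [integral_sub, integral_sub, Real.integral_two_cos_mul χ.integrable]
  · exact integrable_two_cos_mul lam χ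
  · exact hG.mul_schwartz χ
  · exact (integrable_two_cos_mul lam χ).sub (hG.mul_schwartz χ)
  · exact hG.fourierInv_mul_schwartz χ

theorem pairingA_hplusOf_fourierInv (hG : Integrable G) (heven : ∀ᵐ v, G (-v) = G v)
    (χ : 𝓢(ℝ, ℂ)) :
    pairingA lam (hplusOf lam G) (𝓕⁻ (χ : ℝ → ℂ)) = pairingA lam (hplusOf lam G) χ := by
  have hχ' := integral_hplusOf_mul (lam := lam) hG (𝓕⁻ χ)
  simp only [SchwartzMap.fourierInv_coe, SchwartzMap.fourierInv_fourierInv_apply, neg_neg] at hχ'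
  -- Not a rewrite: on `ℝ` the general lemma integrates against the inner-product-space volume,
  -- which is `volume` only up to unfolding.
  have hmul : ∫ t, G t * 𝓕⁻ (χ : ℝ → ℂ) t = ∫ t, 𝓕⁻ G t * χ t :=
    (Real.integral_fourierInv_mul_eq hG χ.integrable).symm
  rw [pairingA, pairingA, hχ', integral_hplusOf_mul hG,
    SchwartzMap.integral_fourierInv_mul_fourierInv_of_even hG heven, hmul]
  ring

end hplusOf

theorem pairingA_eq_zero_of_tsupport_subset {lam : ℝ} {h χ : ℝ → ℂ}
    (hh : ∀ᵐ t, t ∈ Ioo (-lam) lam → h t = 0) (hχ : tsupport χ ⊆ Ioo (-lam) lam) :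
    pairingA lam h χ = 0 := by
  have hχ0 : ∀ t ∉ Ioo (-lam) lam, χ t = 0 := fun t ht =>
    image_eq_zero_of_notMem_tsupport fun h => ht (hχ h)
  have hprod : (fun t => h t * χ t) =ᵐ[volume] fun _ => 0 := hh.mono fun t ht => by
    by_cases hmem : t ∈ Ioo (-lam) lam
    · simp [ht hmem]
    · simp [hχ0 t hmem]
  rw [pairingA, hχ0 lam (by simp), hχ0 (-lam) (by simp), integral_congr_ae hprod,
    integral_zero]
  ring

theorem Fop_ae_eq {F : Lp ℂ 2 (volume : Measure ℝ) ≃ₗᵢ[ℂ] Lp ℂ 2 (volume : Measure ℝ)}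
    (hF : IsFourierPlancherel F) (lam : ℝ) (g : Lp ℂ 2 (volume : Measure ℝ)) :
    Fop lam F g =ᵐ[volume] (Ioo (-lam) lam).indicator (𝓕⁻ ((Ioo (-lam) lam).indicator g)) := by
  have hPF : F (Pproj lam g) =ᵐ[volume] 𝓕⁻ ((Ioo (-lam) lam).indicator g) :=
    hF _ (((Lp.memLp g).locallyIntegrable one_le_two).integrable_indicator_Ioo (-lam) lam)
      ((Lp.memLp g).indicator measurableSet_Ioo)
  have hFop : Fop lam F g =ᵐ[volume] (Ioo (-lam) lam).indicator (F (Pproj lam g)) := by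
    unfold Fop Pproj
    exact MemLp.coeFn_toLp _
  exact hFop.trans hPF.indicator

theorem hplusOf_ae_eq_zero_on_Ioo {lam : ℝ}
    {F : Lp ℂ 2 (volume : Measure ℝ) ≃ₗᵢ[ℂ] Lp ℂ 2 (volume : Measure ℝ)}
    (hF : IsFourierPlancherel F) {g : Lp ℂ 2 (volume : Measure ℝ)}
    (hg : ∀ᵐ t : ℝ, g t + (Fop lam F g) t =
      (Ioo (-lam) lam).indicator (fun s : ℝ => (2 * Real.cos (2 * π * lam * s) : ℂ)) t) :
    ∀ᵐ t, t ∈ Ioo (-lam) lam → hplusOf lam ((Ioo (-lam) lam).indicator g) t = 0 := by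
  filter_upwards [hg, Fop_ae_eq hF lam g] with t hgt hFt ht
  rw [hFt, indicator_of_mem ht, indicator_of_mem ht] at hgt
  rw [hplusOf, indicator_of_mem ht, ← hgt]
  ring

theorem Alambda_sonine_general (lam : ℝ) (hlam : 0 < lam)
    (F : Lp ℂ 2 (volume : Measure ℝ) ≃ₗᵢ[ℂ] Lp ℂ 2 (volume : Measure ℝ))
    (hF : IsFourierPlancherel F)
    (g : Lp ℂ 2 (volume : Measure ℝ))
    (hge : ∀ᵐ x : ℝ, g (-x) = g x)
    (hg : ∀ᵐ t : ℝ, g t + (Fop lam F g) t =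
      Set.indicator (Ioo (-lam) lam)
        (fun s : ℝ => (2 * Real.cos (2 * Real.pi * lam * s) : ℂ)) t) :
    (∀ χ : SchwartzMap ℝ ℂ, Integrable (fun t : ℝ => hplus lam g t * χ t) volume) ∧
    (∀ χ : SchwartzMap ℝ ℂ,
      pairingA lam (hplus lam g) (𝓕⁻ (χ : ℝ → ℂ)) =
        pairingA lam (hplus lam g) (χ : ℝ → ℂ)) ∧
    (∀ χ : SchwartzMap ℝ ℂ, tsupport (χ : ℝ → ℂ) ⊆ Ioo (-lam) lam →
      pairingA lam (hplus lam g) (χ : ℝ → ℂ) = 0 ∧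
      pairingA lam (hplus lam g) (𝓕⁻ (χ : ℝ → ℂ)) = 0) := by
  have hG := ((Lp.memLp g).locallyIntegrable one_le_two).integrable_indicator_Ioo (-lam) lam
  have hinv :=
    pairingA_hplusOf_fourierInv (lam := lam) hG (ae_indicator_Ioo_neg_eq_of_even hge lam)
  rw [hplus_eq_hplusOf hlam.le hge]
  refine ⟨integrable_hplusOf_mul hG, hinv, fun χ hχ => ?_⟩
  have hzero := pairingA_eq_zero_of_tsupport_subset (hplusOf_ae_eq_zero_on_Ioo hF hg) hχ
  exact ⟨hzero, (hinv χ).trans hzero⟩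

/-- The distribution `A_λ = δ_λ + δ_{−λ} + h₊` is Fourier invariant and has the
Sonine property: it vanishes, together with its Fourier transform, on `(−λ,λ)`. -/
theorem Alambda_sonine (lam : ℝ) (hlam : 0 < lam)
    (F : Lp ℂ 2 (volume : Measure ℝ) ≃ₗᵢ[ℂ] Lp ℂ 2 (volume : Measure ℝ))
    (hF : IsFourierPlancherel F)
    (g : Lp ℂ 2 (volume : Measure ℝ))
    (hge : ∀ᵐ x : ℝ, g (-x) = g x)
    (hgs : ∀ᵐ x : ℝ, x ∉ Ioo (-lam) lam → g x = 0)
    (hg : ∀ᵐ t : ℝ, g t + (Fop lam F g) t =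
      Set.indicator (Ioo (-lam) lam)
        (fun s : ℝ => (2 * Real.cos (2 * Real.pi * lam * s) : ℂ)) t) :
    (∀ χ : SchwartzMap ℝ ℂ, Integrable (fun t : ℝ => hplus lam g t * χ t) volume) ∧
    (∀ χ : SchwartzMap ℝ ℂ,
      pairingA lam (hplus lam g) (𝓕⁻ (χ : ℝ → ℂ)) =
        pairingA lam (hplus lam g) (χ : ℝ → ℂ)) ∧
    (∀ χ : SchwartzMap ℝ ℂ, tsupport (χ : ℝ → ℂ) ⊆ Ioo (-lam) lam →
      pairingA lam (hplus lam g) (χ : ℝ → ℂ) = 0 ∧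
      pairingA lam (hplus lam g) (𝓕⁻ (χ : ℝ → ℂ)) = 0) :=
  Alambda_sonine_general lam hlam F hF g hge hg
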